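/- Conjecture 3.1 (proved in the paper): Consider a binary reaction network, i.e. ‖y_k‖₁ ≤ 2 and ‖y'_k‖₁ ≤ 2 for all k. Suppose c : [0,∞) → ℝ^d_{>0} is differentiable, solves the mass-action ODE c'(t) = Σ_k κ_k c(t)^{y_k} ζ_k with c(0) = c̃ ∈ ℝ^d_{>0}, and satisfies B_{ij}(c(t)) = 0 for all i,j ∈ {1,…,d} and all t ≥ 0. Then P(x,t) := ∏_{i=1}^d e^{−c_i(t)} c_i(t)^{x_i}/x_i! solves the chemical master equation with initial condition P(x,0) = ∏_{i=1}^d e^{−c̃_i} c̃_i^{x_i}/x_i!; that is, if the initial distribution is a product of Poissons and the Poisson-representation diffusion matrix vanishes along the deterministic solution, the distribution is a product of Poissons for all time. -/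

import Mathlib

/-!
Write `u = c(t)` and `N(v) = ∏ᵢ (xᵢ)_{vᵢ} / uᵢ^{vᵢ}` (falling factorials). Against the
product-Poisson weight `P`, the outflow of reaction `k` is `κₖ u^{yₖ} P(x) N(yₖ)`, the inflow is
`κₖ u^{yₖ} P(x) N(y'ₖ)`, and `∂ₜ P = P · Σᵢ cᵢ' (xᵢ/uᵢ - 1) = P · Σᵢ cᵢ' Δᵢ N(0)`. On complexes of
size at most two every function equals its second-order Newton expansion at `0`, whose quadratic
coefficients are the pair counts `v_a v_b - δ_ab v_a`. Summed against the weights `κₖ u^{yₖ}`, the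
quadratic part becomes `½ Σ_ab B_ab(u) Δ_a Δ_b N(0) = 0`, and the linear part is exactly the
mass-action term `Σᵢ cᵢ' Δᵢ N(0)`.
-/

open Finset

/-- Monomial `u^v = ∏ i, u i ^ v i` (with the convention `0^0 = 1`). -/
noncomputable def monPow {d : ℕ} (u : Fin d → ℝ) (v : Fin d → ℕ) : ℝ :=
  ∏ i, u i ^ v i

/-- The reaction vector `ζ = y' - y`, viewed as a real vector. -/
def zetaVec {d : ℕ} (y y' : Fin d → ℕ) : Fin d → ℝ :=
  fun i => (y' i : ℝ) - (y i : ℝ)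

/-- Stochastic mass action intensity `λ_k(x) = κ_k ∏_i x_i!/(x_i - y_{ki})!`,
taken to be `0` when `x` is not componentwise at least `y_k`. -/
noncomputable def intensity {d : ℕ} (κk : ℝ) (yk : Fin d → ℕ) (x : Fin d → ℕ) : ℝ :=
  κk * ∏ i, ((x i).descFactorial (yk i) : ℝ)

/-- Right-hand side of the deterministic mass-action ODE: `Σ_k κ_k c^{y_k} ζ_k`. -/
noncomputable def massActionRHS {d K : ℕ} (κ : Fin K → ℝ) (y y' : Fin K → Fin d → ℕ)
    (c : Fin d → ℝ) : Fin d → ℝ :=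
  ∑ k, (κ k * monPow c (y k)) • zetaVec (y k) (y' k)

/-- `c` is differentiable on `[0,∞)` and solves the mass-action ODE there. -/
def solvesMassAction {d K : ℕ} (κ : Fin K → ℝ) (y y' : Fin K → Fin d → ℕ)
    (c : ℝ → Fin d → ℝ) : Prop :=
  ∀ t ≥ (0:ℝ), HasDerivWithinAt c (massActionRHS κ y y' (c t)) (Set.Ici 0) t

/-- The dynamical and restricted (DR) complex balance condition: for every complex `z`
with `‖z‖₁ ≥ 2` and every `t ≥ 0`,
`Σ_{k : y_k = z} κ_k c(t)^z = Σ_{k : y'_k = z} κ_k c(t)^{y_k}`. -/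
def DRcondition {d K : ℕ} (κ : Fin K → ℝ) (y y' : Fin K → Fin d → ℕ)
    (c : ℝ → Fin d → ℝ) : Prop :=
  ∀ z : Fin d → ℕ, 2 ≤ ∑ i, z i → ∀ t ≥ (0:ℝ),
    ∑ k ∈ univ.filter (fun k => y k = z), κ k * monPow (c t) z
      = ∑ k ∈ univ.filter (fun k => y' k = z), κ k * monPow (c t) (y k)

/-- `P` solves the chemical master equation on `[0,∞)`:
`∂ₜ P(x,t) = Σ_k λ_k(x-ζ_k) P(x-ζ_k,t) 1{x-ζ_k ≥ 0} - Σ_k λ_k(x) P(x,t)`. -/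
def solvesCME {d K : ℕ} (κ : Fin K → ℝ) (y y' : Fin K → Fin d → ℕ)
    (P : (Fin d → ℕ) → ℝ → ℝ) : Prop :=
  ∀ x : Fin d → ℕ, ∀ t ≥ (0:ℝ),
    HasDerivWithinAt (P x)
      ((∑ k, if ∀ i, y' k i ≤ x i + y k i then
          intensity (κ k) (y k) (fun i => x i + y k i - y' k i)
            * P (fun i => x i + y k i - y' k i) t
        else 0)
       - ∑ k, intensity (κ k) (y k) x * P x t)
      (Set.Ici 0) t

/-- The product-Poisson probability mass function `∏_i e^{-c_i} c_i^{x_i}/x_i!`. -/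
noncomputable def productPoisson {d : ℕ} (c : Fin d → ℝ) (x : Fin d → ℕ) : ℝ :=
  ∏ i, Real.exp (-(c i)) * (c i) ^ (x i) / (x i).factorial

/-- The diffusion matrix of the Poisson representation:
`B_{ij}(u) = Σ_k κ_k u^{y_k} (y'_{ki} y'_{kj} - y_{ki} y_{kj} - δ_{ij} ζ_{ki})`. -/
noncomputable def Bmat {d K : ℕ} (κ : Fin K → ℝ) (y y' : Fin K → Fin d → ℕ)
    (u : Fin d → ℝ) (i j : Fin d) : ℝ :=
  ∑ k, κ k * monPow u (y k) *
    ((y' k i : ℝ) * (y' k j : ℝ) - (y k i : ℝ) * (y k j : ℝ)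
      - (if i = j then (1:ℝ) else 0) * zetaVec (y k) (y' k) i)

open scoped fwdDiff

section SecondOrderExpansion

variable {ι : Type*} [Fintype ι] [DecidableEq ι]

/-- Ordered pairs of distinct molecules, of species `a` and `b`, in the complex `v`. -/
def pairCount (v : ι → ℕ) (a b : ι) : ℝ := v a * v b - if a = b then (v a : ℝ) else 0

lemma exists_eq_single_add_of_ne_zero {v : ι → ℕ} (hv : v ≠ 0) :
    ∃ a, ∃ w : ι → ℕ, v = Pi.single a 1 + w ∧ ∑ i, w i + 1 = ∑ i, v i := by
  obtain ⟨a, ha⟩ := Function.ne_iff.mp hv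
  have hle : Pi.single a 1 ≤ v := fun i => by
    rcases eq_or_ne i a with rfl | hi
    · simpa using Nat.one_le_iff_ne_zero.mpr ha
    · simp [hi]
  have hv' := (add_tsub_cancel_of_le hle).symm
  refine ⟨a, _, hv', ?_⟩
  conv_rhs => rw [hv']
  simp [Finset.sum_add_distrib, add_comm]

lemma sum_sum_pairCount_mul (v : ι → ℕ) (D : ι → ι → ℝ) :
    ∑ i, ∑ j, pairCount v i j * D i j
      = ∑ i, ∑ j, (v i : ℝ) * v j * D i j - ∑ i, (v i : ℝ) * D i i := by
  simp [pairCount, sub_mul, Finset.sum_sub_distrib, ite_mul]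

lemma eq_zero_or_single_or_single_add_single {v : ι → ℕ} (hv : ∑ i, v i ≤ 2) :
    v = 0 ∨ (∃ a, v = Pi.single a 1) ∨ ∃ a b, v = Pi.single a 1 + Pi.single b 1 := by
  rcases eq_or_ne v 0 with rfl | hv₀
  · exact .inl rfl
  obtain ⟨a, w, rfl, hw⟩ := exists_eq_single_add_of_ne_zero hv₀
  rcases eq_or_ne w 0 with rfl | hw₀
  · exact .inr (.inl ⟨a, add_zero _⟩)
  obtain ⟨b, w', rfl, hw'⟩ := exists_eq_single_add_of_ne_zero hw₀
  obtain rfl : w' = 0 := funext fun i =>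
    Finset.sum_eq_zero_iff.mp (show ∑ i, w' i = 0 by omega) i (mem_univ i)
  exact .inr (.inr ⟨a, b, by rw [add_zero]⟩)

theorem eq_add_sum_fwdDiff_of_sum_le_two (f : (ι → ℕ) → ℝ) {v : ι → ℕ} (hv : ∑ i, v i ≤ 2) :
    f v = f 0 + ∑ a, (v a : ℝ) * Δ_[Pi.single a 1] f 0
      + (1 / 2) * ∑ a, ∑ b, pairCount v a b * Δ_[Pi.single a 1] (Δ_[Pi.single b 1] f) 0 := by
  rw [sum_sum_pairCount_mul]
  rcases eq_zero_or_single_or_single_add_single hv with rfl | ⟨a, rfl⟩ | ⟨a, b, rfl⟩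
  · simp
  · simp [Pi.single_apply, fwdDiff]
  · simp [Pi.single_apply, add_mul, mul_add, Finset.sum_add_distrib, ite_mul, fwdDiff]
    rw [add_comm (Pi.single b 1)]
    ring

theorem sum_mul_sub_eq_sum_mul_fwdDiff {κ : Type*} [Fintype κ] (w : κ → ℝ) (y y' : κ → ι → ℕ)
    (hbin : ∀ k, ∑ i, y k i ≤ 2 ∧ ∑ i, y' k i ≤ 2)
    (hpair : ∀ a b, ∑ k, w k * (pairCount (y' k) a b - pairCount (y k) a b) = 0)
    (f : (ι → ℕ) → ℝ) :
    ∑ k, w k * (f (y' k) - f (y k))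
      = ∑ a, (∑ k, w k * ((y' k a : ℝ) - y k a)) * Δ_[Pi.single a 1] f 0 := by
  have hquad : ∑ k, w k * ∑ a, ∑ b, (pairCount (y' k) a b - pairCount (y k) a b)
      * Δ_[Pi.single a 1] (Δ_[Pi.single b 1] f) 0 = 0 := by
    simp only [Finset.mul_sum, ← mul_assoc]
    rw [Finset.sum_comm]
    refine Finset.sum_eq_zero fun a _ => ?_
    rw [Finset.sum_comm]
    refine Finset.sum_eq_zero fun b _ => ?_
    rw [← Finset.sum_mul, hpair, zero_mul]
  calc ∑ k, w k * (f (y' k) - f (y k))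
      = ∑ k, (w k * ∑ a, ((y' k a : ℝ) - y k a) * Δ_[Pi.single a 1] f 0
          + (1 / 2) * (w k * ∑ a, ∑ b, (pairCount (y' k) a b - pairCount (y k) a b)
            * Δ_[Pi.single a 1] (Δ_[Pi.single b 1] f) 0)) := by
        refine Finset.sum_congr rfl fun k _ => ?_
        rw [eq_add_sum_fwdDiff_of_sum_le_two f (hbin k).1,
          eq_add_sum_fwdDiff_of_sum_le_two f (hbin k).2]
        simp only [sub_mul, Finset.sum_sub_distrib]
        ring
    _ = _ := by
        rw [Finset.sum_add_distrib, ← Finset.mul_sum, hquad, mul_zero, add_zero]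
        simp only [Finset.mul_sum, Finset.sum_mul, ← mul_assoc]
        exact Finset.sum_comm

end SecondOrderExpansion

noncomputable def poissonWeight (u : ℝ) (n : ℕ) : ℝ := Real.exp (-u) * u ^ n / n.factorial

lemma descFactorial_mul_poissonWeight (u : ℝ) {n k : ℕ} (hk : k ≤ n) :
    (n.descFactorial k : ℝ) * poissonWeight u n = u ^ k * poissonWeight u (n - k) := by
  obtain ⟨m, rfl⟩ := Nat.exists_eq_add_of_le' hk
  have hfac : ((m + k).factorial : ℝ) = m.factorial * (m + k).descFactorial k := by
    exact_mod_cast (Nat.add_sub_cancel m k ▸ Nat.factorial_mul_descFactorial hk).symm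
  unfold poissonWeight
  rw [Nat.add_sub_cancel, hfac, pow_add]
  have : ((m + k).descFactorial k : ℝ) ≠ 0 := by
    exact_mod_cast (Nat.descFactorial_eq_zero_iff_lt.not.mpr (by omega))
  field_simp

lemma productPoisson_eq_prod {d : ℕ} (u : Fin d → ℝ) (x : Fin d → ℕ) :
    productPoisson u x = ∏ i, poissonWeight (u i) (x i) := rfl

noncomputable def normalizedDescFactorial {d : ℕ} (u : Fin d → ℝ) (x v : Fin d → ℕ) : ℝ :=
  ∏ i, ((x i).descFactorial (v i) : ℝ) / u i ^ v i

lemma fwdDiff_normalizedDescFactorial_zero {d : ℕ} (u : Fin d → ℝ) (x : Fin d → ℕ) (a : Fin d) :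
    Δ_[Pi.single a 1] (normalizedDescFactorial u x) 0 = x a / u a - 1 := by
  rw [fwdDiff, zero_add, normalizedDescFactorial, normalizedDescFactorial,
    Fintype.prod_eq_single a fun i hi => by simp [hi]]
  simp

lemma normalizedDescFactorial_eq_zero {d : ℕ} (u : Fin d → ℝ) {x v : Fin d → ℕ} {i : Fin d}
    (hi : x i < v i) : normalizedDescFactorial u x v = 0 :=
  Finset.prod_eq_zero (mem_univ i) (by simp [Nat.descFactorial_eq_zero_iff_lt.mpr hi])

lemma intensity_mul_productPoisson_shift {d : ℕ} {u : Fin d → ℝ} (hu : ∀ i, u i ≠ 0)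
    (κk : ℝ) {x y y' : Fin d → ℕ} (h : ∀ i, y' i ≤ x i + y i) :
    intensity κk y (fun i => x i + y i - y' i) * productPoisson u (fun i => x i + y i - y' i)
      = κk * monPow u y * productPoisson u x * normalizedDescFactorial u x y' := by
  simp only [intensity, productPoisson_eq_prod, monPow, normalizedDescFactorial, mul_assoc,
    ← Finset.prod_mul_distrib]
  congr 1
  refine Finset.prod_congr rfl fun i _ => ?_
  rcases le_or_gt (y' i) (x i) with hle | hlt
  · rw [descFactorial_mul_poissonWeight _ (by omega),
      show x i + y i - y' i - y i = x i - y' i by omega, mul_div_assoc',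
      mul_comm (poissonWeight _ _), descFactorial_mul_poissonWeight _ hle]
    field_simp [hu i]
  · rw [Nat.descFactorial_eq_zero_iff_lt.mpr (by have := h i; omega),
      Nat.descFactorial_eq_zero_iff_lt.mpr hlt]
    simp

lemma intensity_mul_productPoisson {d : ℕ} {u : Fin d → ℝ} (hu : ∀ i, u i ≠ 0)
    (κk : ℝ) (x y : Fin d → ℕ) :
    intensity κk y x * productPoisson u x
      = κk * monPow u y * productPoisson u x * normalizedDescFactorial u x y := by
  simpa using intensity_mul_productPoisson_shift hu κk (x := x) (y' := y) fun i => le_add_self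

lemma cme_rhs_productPoisson_eq {d K : ℕ} (κ : Fin K → ℝ) (y y' : Fin K → Fin d → ℕ)
    {u : Fin d → ℝ} (hu : ∀ i, u i ≠ 0) (x : Fin d → ℕ) :
    (∑ k, if ∀ i, y' k i ≤ x i + y k i then
          intensity (κ k) (y k) (fun i => x i + y k i - y' k i)
            * productPoisson u (fun i => x i + y k i - y' k i)
        else 0)
      - ∑ k, intensity (κ k) (y k) x * productPoisson u x
      = productPoisson u x * ∑ k, κ k * monPow u (y k)
          * (normalizedDescFactorial u x (y' k) - normalizedDescFactorial u x (y k)) := by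
  have hinflow : ∀ k, (if ∀ i, y' k i ≤ x i + y k i then
        intensity (κ k) (y k) (fun i => x i + y k i - y' k i)
          * productPoisson u (fun i => x i + y k i - y' k i)
      else 0) = κ k * monPow u (y k) * productPoisson u x * normalizedDescFactorial u x (y' k) := by
    intro k
    split_ifs with h
    · exact intensity_mul_productPoisson_shift hu (κ k) h
    · push Not at h
      obtain ⟨i, hi⟩ := h
      rw [normalizedDescFactorial_eq_zero u (i := i) (by omega), mul_zero]
  rw [Finset.sum_congr rfl fun k _ => hinflow k]
  simp only [intensity_mul_productPoisson hu, ← Finset.sum_sub_distrib, Finset.mul_sum]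
  exact Finset.sum_congr rfl fun k _ => by ring

lemma hasDerivAt_poissonWeight {u : ℝ} (hu : u ≠ 0) (n : ℕ) :
    HasDerivAt (poissonWeight · n) (poissonWeight u n * (n / u - 1)) u := by
  refine ((((hasDerivAt_neg u).exp).mul (hasDerivAt_pow n u)).div_const
    (n.factorial : ℝ)).congr_deriv ?_
  unfold poissonWeight
  rcases n with _ | n
  · simp
  · rw [Nat.add_sub_cancel]
    field_simp
    ring

lemma hasDerivWithinAt_productPoisson {d : ℕ} {c : ℝ → Fin d → ℝ} {c' : Fin d → ℝ} {s : Set ℝ}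
    {t : ℝ} (hc : HasDerivWithinAt c c' s t) (hu : ∀ i, c t i ≠ 0) (x : Fin d → ℕ) :
    HasDerivWithinAt (fun τ => productPoisson (c τ) x)
      (productPoisson (c t) x * ∑ i, c' i * (x i / c t i - 1)) s t := by
  have hcoord : ∀ i ∈ univ, HasDerivWithinAt (fun τ => poissonWeight (c τ i) (x i))
      (poissonWeight (c t i) (x i) * (x i / c t i - 1) * c' i) s t := fun i _ =>
    (hasDerivAt_poissonWeight (hu i) (x i)).comp_hasDerivWithinAt (h := fun τ => c τ i) t
      (hasDerivWithinAt_pi.mp hc i)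
  refine (HasDerivWithinAt.fun_finsetProd hcoord).congr_deriv ?_
  rw [productPoisson_eq_prod, Finset.mul_sum]
  refine Finset.sum_congr rfl fun i _ => ?_
  rw [smul_eq_mul, ← Finset.prod_erase_mul univ _ (mem_univ i)]
  ring

lemma massActionRHS_apply {d K : ℕ} (κ : Fin K → ℝ) (y y' : Fin K → Fin d → ℕ)
    (u : Fin d → ℝ) (i : Fin d) :
    massActionRHS κ y y' u i = ∑ k, κ k * monPow u (y k) * ((y' k i : ℝ) - y k i) := by
  simp [massActionRHS, zetaVec]

lemma Bmat_eq_sum_pairCount {d K : ℕ} (κ : Fin K → ℝ) (y y' : Fin K → Fin d → ℕ)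
    (u : Fin d → ℝ) (i j : Fin d) :
    Bmat κ y y' u i j
      = ∑ k, κ k * monPow u (y k) * (pairCount (y' k) i j - pairCount (y k) i j) := by
  refine Finset.sum_congr rfl fun k _ => ?_
  simp only [pairCount, zetaVec]
  split_ifs <;> ring

theorem binary_zero_diffusion_implies_productPoisson_solution_general
    {d K : ℕ} (κ : Fin K → ℝ) (y y' : Fin K → Fin d → ℕ)
    (hbin : ∀ k, (∑ i, y k i) ≤ 2 ∧ (∑ i, y' k i) ≤ 2)
    (ctilde : Fin d → ℝ)
    (c : ℝ → Fin d → ℝ) (hcpos : ∀ t ≥ (0:ℝ), ∀ i, 0 < c t i)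
    (hc0 : c 0 = ctilde)
    (hODE : solvesMassAction κ y y' c)
    (hB : ∀ i j : Fin d, ∀ t ≥ (0:ℝ), Bmat κ y y' (c t) i j = 0) :
    solvesCME κ y y' (fun x t => productPoisson (c t) x)
      ∧ ∀ x : Fin d → ℕ, productPoisson (c 0) x = productPoisson ctilde x := by
  refine ⟨fun x t ht => ?_, fun x => by rw [hc0]⟩
  have hu : ∀ i, c t i ≠ 0 := fun i => (hcpos t ht i).ne'
  have hbalance := sum_mul_sub_eq_sum_mul_fwdDiff _ y y' hbin
    (fun a b => (Bmat_eq_sum_pairCount κ y y' (c t) a b).symm.trans (hB a b t ht))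
    (normalizedDescFactorial (c t) x)
  simp only [fwdDiff_normalizedDescFactorial_zero, ← massActionRHS_apply] at hbalance
  rw [cme_rhs_productPoisson_eq κ y y' hu, hbalance]
  exact hasDerivWithinAt_productPoisson (hODE t ht) hu x

/-- Conjecture 3.1 (proved in the paper): for a binary reaction network, if `c > 0` solves
the mass-action ODE with `c(0) = c̃` and the Poisson-representation diffusion matrix vanishes
along `c`, then the product-Poisson function with parameter `c(t)` solves the chemical master
equation, with initial condition the product-Poisson distribution with parameter `c̃`. -/
theorem binary_zero_diffusion_implies_productPoisson_solution
    {d K : ℕ} (κ : Fin K → ℝ) (y y' : Fin K → Fin d → ℕ)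
    (hκ : ∀ k, 0 ≤ κ k) (hyy' : ∀ k, y' k ≠ y k)
    (hbin : ∀ k, (∑ i, y k i) ≤ 2 ∧ (∑ i, y' k i) ≤ 2)
    (ctilde : Fin d → ℝ) (hctilde : ∀ i, 0 < ctilde i)
    (c : ℝ → Fin d → ℝ) (hcpos : ∀ t ≥ (0:ℝ), ∀ i, 0 < c t i)
    (hc0 : c 0 = ctilde)
    (hODE : solvesMassAction κ y y' c)
    (hB : ∀ i j : Fin d, ∀ t ≥ (0:ℝ), Bmat κ y y' (c t) i j = 0) :
    solvesCME κ y y' (fun x t => productPoisson (c t) x)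
      ∧ ∀ x : Fin d → ℕ, productPoisson (c 0) x = productPoisson ctilde x :=
  binary_zero_diffusion_implies_productPoisson_solution_general κ y y' hbin ctilde c hcpos hc0 hODE
    hB
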